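/- arXiv:1607.06632 — 5 statements merged into one kernel-verified Lean document; each statement's English description precedes it below -/
import Mathlib

section
/- Let (μ_n) be a bounded nonnegative real sequence such that for some ω_μ ∈ ℕ one has limsup_{n→∞} ∏_{k=n}^{n+ω_μ} 1/(1+μ_k) < 1. Then there exist constants K > 0, θ ∈ (0,1) and N ∈ ℕ such that for all m, n ∈ ℕ with N ≤ m ≤ n one has ∏_{k=m}^{n−1} 1/(1+μ_k) ≤ K·θ^{n−m}. -/
open Filter

/-- If `(μ_n)` is a bounded nonnegative sequence with
`limsup_{n→∞} ∏_{k=n}^{n+ωμ} 1/(1+μ_k) < 1`, then there are `K > 0`, `θ ∈ (0,1)` and `N`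
such that `∏_{k=m}^{n-1} 1/(1+μ_k) ≤ K θ^(n-m)` whenever `N ≤ m ≤ n`. -/
theorem statement1 (μ : ℕ → ℝ) (hnn : ∀ n, 0 ≤ μ n) (hbdd : ∃ C : ℝ, ∀ n, μ n ≤ C)
    (ωμ : ℕ)
    (h3 : Filter.limsup
      (fun n => ∏ k ∈ Finset.Icc n (n + ωμ), (1 + μ k)⁻¹) Filter.atTop < 1) :
    ∃ K θ : ℝ, 0 < K ∧ 0 < θ ∧ θ < 1 ∧ ∃ N : ℕ, ∀ m n : ℕ, N ≤ m → m ≤ n →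
      ∏ k ∈ Finset.Ico m n, (1 + μ k)⁻¹ ≤ K * θ ^ (n - m) := by
  set L := ωμ + 1 with hLdef
  have hpos : ∀ k, (0:ℝ) < 1 + μ k := fun k => by linarith [hnn k]
  have hfac0 : ∀ k, (0:ℝ) ≤ (1 + μ k)⁻¹ := fun k => (inv_pos.2 (hpos k)).le
  have hfac1 : ∀ k, (1 + μ k)⁻¹ ≤ 1 := fun k =>
    inv_le_one_of_one_le₀ (by linarith [hnn k])
  have hprod_le_one : ∀ s : Finset ℕ, ∏ k ∈ s, (1 + μ k)⁻¹ ≤ 1 := fun s =>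
    Finset.prod_le_one (fun k _ => hfac0 k) (fun k _ => hfac1 k)
  have hprod_nonneg : ∀ s : Finset ℕ, 0 ≤ ∏ k ∈ s, (1 + μ k)⁻¹ := fun s =>
    Finset.prod_nonneg (fun k _ => hfac0 k)
  set s := Filter.limsup (fun n => ∏ k ∈ Finset.Icc n (n + ωμ), (1 + μ k)⁻¹) Filter.atTop
  set ρ : ℝ := (1 + max s 0) / 2 with hρdef
  have hρ0 : 0 < ρ := by
    have : (0:ℝ) ≤ max s 0 := le_max_right _ _
    rw [hρdef]; linarith
  have hρ1 : ρ < 1 := by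
    have h1 : max s 0 < 1 := max_lt h3 one_pos
    rw [hρdef]; linarith
  have hsρ : s < ρ := by
    have h1 : s ≤ max s 0 := le_max_left _ _
    have h2 : max s 0 < 1 := max_lt h3 one_pos
    rw [hρdef]; linarith
  have hble : IsBoundedUnder (· ≤ ·) atTop
      (fun n => ∏ k ∈ Finset.Icc n (n + ωμ), (1 + μ k)⁻¹) :=
    Filter.isBoundedUnder_of ⟨1, fun n => hprod_le_one _⟩
  have hev : ∀ᶠ n in atTop,
      (∏ k ∈ Finset.Icc n (n + ωμ), (1 + μ k)⁻¹) < ρ :=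
    Filter.eventually_lt_of_limsup_lt hsρ hble
  obtain ⟨N, hN⟩ := Filter.eventually_atTop.1 hev
  have key : ∀ m, N ≤ m → ∏ k ∈ Finset.Ico m (m + L), (1 + μ k)⁻¹ ≤ ρ := by
    intro m hm
    have heq : Finset.Ico m (m + L) = Finset.Icc m (m + ωμ) := by
      have h' : m + L = (m + ωμ) + 1 := by rw [hLdef]; ring
      rw [h', Finset.Ico_add_one_right_eq_Icc]
    rw [heq]
    exact (hN m hm).le
  have blocks : ∀ q m, N ≤ m →
      ∏ k ∈ Finset.Ico m (m + q * L), (1 + μ k)⁻¹ ≤ ρ ^ q := by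
    intro q
    induction q with
    | zero => intro m hm; simp
    | succ q ih =>
      intro m hm
      have h1 : m ≤ m + L := Nat.le_add_right _ _
      have h2 : m + L ≤ m + (q + 1) * L := by nlinarith [Nat.le_refl L]
      rw [← Finset.prod_Ico_consecutive _ h1 h2]
      have hrest : ∏ k ∈ Finset.Ico (m + L) (m + (q + 1) * L), (1 + μ k)⁻¹ ≤ ρ ^ q := by
        have : m + (q + 1) * L = (m + L) + q * L := by ring
        rw [this]
        exact ih (m + L) (le_trans hm h1)
      calc (∏ k ∈ Finset.Ico m (m + L), (1 + μ k)⁻¹) *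
            ∏ k ∈ Finset.Ico (m + L) (m + (q + 1) * L), (1 + μ k)⁻¹
          ≤ ρ * ρ ^ q := by
            exact mul_le_mul (key m hm) hrest (hprod_nonneg _) hρ0.le
        _ = ρ ^ (q + 1) := by ring
  set θ : ℝ := ρ ^ ((L : ℝ)⁻¹) with hθdef
  have hθ0 : 0 < θ := Real.rpow_pos_of_pos hρ0 _
  have hθ1 : θ < 1 := Real.rpow_lt_one hρ0.le hρ1 (by positivity)
  have hθL : θ ^ L = ρ := by
    rw [hθdef, ← Real.rpow_natCast (ρ ^ ((L : ℝ)⁻¹)) L, ← Real.rpow_mul hρ0.le]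
    rw [inv_mul_cancel₀ (by positivity), Real.rpow_one]
  refine ⟨ρ⁻¹, θ, inv_pos.2 hρ0, hθ0, hθ1, N, ?_⟩
  intro m n hm hmn
  obtain ⟨q, r, hrL, hdqr⟩ : ∃ q r, r < L ∧ n - m = q * L + r :=
    ⟨(n - m) / L, (n - m) % L, Nat.mod_lt _ (Nat.succ_pos _),
      by rw [mul_comm]; exact (Nat.div_add_mod _ _).symm⟩
  have hsplit : m ≤ m + q * L := Nat.le_add_right _ _
  have hsplit2 : m + q * L ≤ n := by omega
  have hmain : ∏ k ∈ Finset.Ico m n, (1 + μ k)⁻¹ ≤ ρ ^ q := by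
    rw [← Finset.prod_Ico_consecutive _ hsplit hsplit2]
    calc (∏ k ∈ Finset.Ico m (m + q * L), (1 + μ k)⁻¹) *
          ∏ k ∈ Finset.Ico (m + q * L) n, (1 + μ k)⁻¹
        ≤ ρ ^ q * 1 :=
          mul_le_mul (blocks q m hm) (hprod_le_one _) (hprod_nonneg _)
            (pow_nonneg hρ0.le _)
      _ = ρ ^ q := mul_one _
  have hθd : θ ^ (n - m) = ρ ^ q * θ ^ r := by
    rw [hdqr, pow_add, mul_comm q L, pow_mul, hθL]
  have hθr : ρ ≤ θ ^ r := by
    calc ρ = θ ^ L := hθL.symm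
      _ ≤ θ ^ r := pow_le_pow_of_le_one hθ0.le hθ1.le hrL.le
  have hq0 : (0:ℝ) ≤ ρ ^ q := pow_nonneg hρ0.le _
  have hfin : ρ ^ q ≤ ρ⁻¹ * θ ^ (n - m) := by
    rw [hθd, inv_mul_eq_div, le_div_iff₀ hρ0]
    nlinarith
  exact le_trans hmain hfin
end

section
/- Assume hypotheses (H1), (H3) and (H4). If ξ₁* = (x₁*_n, y₁*_n) and ξ₂* = (x₂*_n, y₂*_n) are two solutions of the auxiliary system with x₁*_0 > 0, y₁*_0 > 0, x₂*_0 > 0, y₂*_0 > 0, then for every λ ∈ ℕ, R_D^ℓ(ξ₁*, λ) = R_D^ℓ(ξ₂*, λ) and R_D^u(ξ₁*, λ) = R_D^u(ξ₂*, λ); that is, the numbers R_D^ℓ(ξ*, λ) and R_D^u(ξ*, λ) do not depend on the chosen positive solution of the auxiliary system. -/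
open Filter

noncomputable section

/-- Partial derivative of `φ` with respect to the second variable, evaluated at `(x, 0)`. -/
def d2 (φ : ℝ → ℝ → ℝ) (x : ℝ) : ℝ := deriv (fun y => φ x y) 0

/-- A bounded nonnegative real sequence. -/
def BddNonneg (u : ℕ → ℝ) : Prop := (∀ n, 0 ≤ u n) ∧ ∃ C : ℝ, ∀ n, u n ≤ C

/-- (H1): `φ` is nonnegative and differentiable on `[0,∞)²`, and `x ↦ ∂₂φ(x,0)` is
non-decreasing and Lipschitz on `[0,∞)` with constant `kφ`. -/
def HypH1 (φ : ℝ → ℝ → ℝ) (kφ : ℝ) : Prop :=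
  (∀ x y, 0 ≤ x → 0 ≤ y → 0 ≤ φ x y) ∧
  DifferentiableOn ℝ (fun q : ℝ × ℝ => φ q.1 q.2) (Set.Ici (0:ℝ) ×ˢ Set.Ici (0:ℝ)) ∧
  (∀ x₁ x₂, 0 ≤ x₁ → x₁ ≤ x₂ → d2 φ x₁ ≤ d2 φ x₂) ∧
  (∀ x₁ x₂, 0 ≤ x₁ → 0 ≤ x₂ → |d2 φ x₁ - d2 φ x₂| ≤ kφ * |x₁ - x₂|)

/-- (H2): `φ(x,0) = ψ(x,0) = φ(0,y) = ψ(0,y) = 0` for all `x, y ≥ 0`. -/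
def HypH2 (φ ψ : ℝ → ℝ → ℝ) : Prop :=
  ∀ x y, 0 ≤ x → 0 ≤ y → φ x 0 = 0 ∧ ψ x 0 = 0 ∧ φ 0 y = 0 ∧ ψ 0 y = 0

/-- (H3): `limsup_{n→∞} ∏_{k=n}^{n+ωμ} 1/(1+μ_k) < 1` for some `ωμ`. -/
def HypH3 (μ : ℕ → ℝ) : Prop :=
  ∃ ωμ : ℕ, Filter.limsup
    (fun n => ∏ k ∈ Finset.Icc n (n + ωμ), (1 + μ k)⁻¹) Filter.atTop < 1

/-- (H4): `liminf_{n→∞} Σ_{k=n+1}^{n+ωΛ} Λ_k > 0` and `liminf_{n→∞} Σ_{k=n+1}^{n+ωp} p_k > 0`. -/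
def HypH4 (Lam p : ℕ → ℝ) : Prop :=
  (∃ ωΛ : ℕ, 0 < Filter.liminf
    (fun n => ∑ k ∈ Finset.Icc (n+1) (n+ωΛ), Lam k) Filter.atTop) ∧
  (∃ ωp : ℕ, 0 < Filter.liminf
    (fun n => ∑ k ∈ Finset.Icc (n+1) (n+ωp), p k) Filter.atTop)

/-- (H5): for each `x ≥ 0`, the map `y ↦ φ(x,y)/y` is non-increasing on `(0,∞)`. -/
def HypH5 (φ : ℝ → ℝ → ℝ) : Prop :=
  ∀ x, 0 ≤ x → ∀ y₁ y₂, 0 < y₁ → y₁ ≤ y₂ → φ x y₂ / y₂ ≤ φ x y₁ / y₁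

/-- The discrete SIRVS system. -/
def SIRVS (Lam μ p η α β σ γ : ℕ → ℝ) (φ ψ : ℝ → ℝ → ℝ) (S I R V : ℕ → ℝ) : Prop :=
  ∀ n : ℕ,
    S (n+1) - S n
      = Lam n - β n * φ (S (n+1)) (I n) - (μ n + p n) * S (n+1) + η n * V (n+1) ∧
    I (n+1) - I n
      = β n * φ (S (n+1)) (I n) + σ n * ψ (V (n+1)) (I n) - (μ n + α n + γ n) * I (n+1) ∧
    R (n+1) - R n = γ n * I (n+1) - μ n * R (n+1) ∧
    V (n+1) - V n = p n * S (n+1) - (μ n + η n) * V (n+1) - σ n * ψ (V (n+1)) (I n)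

/-- The auxiliary (disease-free) system. -/
def AuxSys (Lam μ p η : ℕ → ℝ) (x y : ℕ → ℝ) : Prop :=
  ∀ n : ℕ,
    x (n+1) = (Lam n + η n * y (n+1) + x n) / (1 + μ n + p n) ∧
    y (n+1) = (p n * x (n+1) + y n) / (1 + μ n + η n)

/-- The threshold `R_D^ℓ(ξ*, λ)`. -/
def RDl (μ α β σ γ : ℕ → ℝ) (φ ψ : ℝ → ℝ → ℝ) (x y : ℕ → ℝ) (lam : ℕ) : ℝ :=
  Filter.liminf (fun n => ∏ k ∈ Finset.Icc n (n + lam),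
    (1 + β k * d2 φ (x (k+1)) + σ k * d2 ψ (y (k+1))) / (1 + μ k + α k + γ k))
    Filter.atTop

/-- The threshold `R_D^u(ξ*, λ)`. -/
def RDu (μ α β σ γ : ℕ → ℝ) (φ ψ : ℝ → ℝ → ℝ) (x y : ℕ → ℝ) (lam : ℕ) : ℝ :=
  Filter.limsup (fun n => ∏ k ∈ Finset.Icc n (n + lam),
    (1 + β k * d2 φ (x (k+1)) + σ k * d2 ψ (y (k+1))) / (1 + μ k + α k + γ k))
    Filter.atTop

/-!
The auxiliary system is linear, so the difference of two solutions solves the system with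
`Λ = 0`, and each step of the system with nonnegative coefficients contracts `|x| + |y|` up to
`Λ` by the factor `(1 + μ n)⁻¹`. Iterating over windows of length `ωμ + 1`, (H3) makes this a
strict contraction: the difference of two solutions tends to zero, and every solution is
bounded. By the Lipschitz bounds in (H1) the factors of the products defining `R_D^ℓ` and `R_D^u`
are then bounded and asymptotically equal along the two solutions, hence so are the window
products, and bounded sequences whose difference tends to zero share liminf and limsup.
-/

open Topology

section Limits

variable {ι : Type*}

lemma abs_prod_le_pow_card (s : Finset ι) {f : ι → ℝ} {M : ℝ} (hf : ∀ i ∈ s, |f i| ≤ M) :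
    |∏ i ∈ s, f i| ≤ M ^ s.card := by
  rw [Finset.abs_prod, ← Finset.prod_const]
  exact Finset.prod_le_prod (fun i _ => abs_nonneg _) hf

lemma tendsto_prod_sub_prod {α : Type*} {l : Filter α} (s : Finset ι) {f g : ι → α → ℝ}
    {M N : ℝ} (hf : ∀ i a, |f i a| ≤ M) (hg : ∀ i a, |g i a| ≤ N)
    (h : ∀ i ∈ s, Tendsto (fun a => f i a - g i a) l (𝓝 0)) :
    Tendsto (fun a => ∏ i ∈ s, f i a - ∏ i ∈ s, g i a) l (𝓝 0) := by
  classical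
  induction s using Finset.induction_on with
  | empty => simpa using tendsto_const_nhds
  | insert j s hj ih =>
    simp only [Finset.prod_insert hj]
    have hfs : IsBoundedUnder (· ≤ ·) l (norm ∘ fun a => ∏ i ∈ s, f i a) :=
      isBoundedUnder_of ⟨M ^ s.card, fun a => abs_prod_le_pow_card s fun i _ => hf i a⟩
    have hgj : IsBoundedUnder (· ≤ ·) l (norm ∘ g j) := isBoundedUnder_of ⟨N, hg j⟩
    have key := ((h j (s.mem_insert_self j)).zero_mul_isBoundedUnder_le hfs).add
      (isBoundedUnder_le_mul_tendsto_zero hgj (ih fun i hi => h i (s.mem_insert_of_mem hi)))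
    rw [add_zero] at key
    convert key using 2 with a
    ring

lemma tendsto_prod_Icc_sub_prod_Icc {u v : ℕ → ℝ} {M N : ℝ} (hu : ∀ n, |u n| ≤ M)
    (hv : ∀ n, |v n| ≤ N) (h : Tendsto (u - v) atTop (𝓝 0)) (m : ℕ) :
    Tendsto (fun n => ∏ k ∈ Finset.Icc n (n + m), u k - ∏ k ∈ Finset.Icc n (n + m), v k)
      atTop (𝓝 0) := by
  simp only [← Finset.Ico_add_one_right_eq_Icc, Finset.prod_Ico_eq_prod_range,
    add_assoc, add_tsub_cancel_left]
  exact tendsto_prod_sub_prod _ (fun k n => hu (n + k)) (fun k n => hv (n + k))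
    fun k _ => h.comp (tendsto_add_atTop_nat k)

variable {l : Filter ι} [l.NeBot] {u v : ι → ℝ}

lemma limsup_eq_of_tendsto_sub (hu : IsBoundedUnder (· ≤ ·) l fun i => |u i|)
    (h : Tendsto (v - u) l (𝓝 0)) : limsup v l = limsup u l := by
  obtain ⟨hu₁, hu₂⟩ := isBoundedUnder_le_abs.1 hu
  have hv : v = u + (v - u) := by abel
  apply le_antisymm
  · calc limsup v l = limsup (u + (v - u)) l := by rw [← hv]
      _ ≤ limsup u l + limsup (v - u) l :=
        limsup_add_le hu₂ hu₁ h.isBoundedUnder_ge.isCoboundedUnder_le h.isBoundedUnder_le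
      _ = limsup u l := by rw [h.limsup_eq, add_zero]
  · calc limsup u l = limsup u l + liminf (v - u) l := by rw [h.liminf_eq, add_zero]
      _ ≤ limsup (u + (v - u)) l :=
        le_limsup_add hu₁ hu₂.isCoboundedUnder_le h.isBoundedUnder_le h.isBoundedUnder_ge
      _ = limsup v l := by rw [← hv]

lemma liminf_eq_of_tendsto_sub (hu : IsBoundedUnder (· ≤ ·) l fun i => |u i|)
    (h : Tendsto (v - u) l (𝓝 0)) : liminf v l = liminf u l := by
  obtain ⟨hu₁, hu₂⟩ := isBoundedUnder_le_abs.1 hu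
  have hv : v = (v - u) + u := by abel
  apply le_antisymm
  · calc liminf v l = liminf ((v - u) + u) l := by rw [← hv]
      _ ≤ limsup (v - u) l + liminf u l :=
        liminf_add_le h.isBoundedUnder_ge h.isBoundedUnder_le hu₂ hu₁.isCoboundedUnder_ge
      _ = liminf u l := by rw [h.limsup_eq, zero_add]
  · calc liminf u l = liminf (v - u) l + liminf u l := by rw [h.liminf_eq, zero_add]
      _ ≤ liminf ((v - u) + u) l :=
        le_liminf_add h.isBoundedUnder_ge h.isBoundedUnder_le hu₂ hu₁.isCoboundedUnder_ge
      _ = liminf v l := by rw [← hv]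

end Limits

lemma liminf_limsup_prod_Icc_eq {u v : ℕ → ℝ} (hu : ∃ M, ∀ n, |u n| ≤ M)
    (hv : ∃ N, ∀ n, |v n| ≤ N) (h : Tendsto (u - v) atTop (𝓝 0)) (m : ℕ) :
    liminf (fun n => ∏ k ∈ Finset.Icc n (n + m), u k) atTop
        = liminf (fun n => ∏ k ∈ Finset.Icc n (n + m), v k) atTop ∧
      limsup (fun n => ∏ k ∈ Finset.Icc n (n + m), u k) atTop
        = limsup (fun n => ∏ k ∈ Finset.Icc n (n + m), v k) atTop := by
  obtain ⟨M, hM⟩ := hu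
  obtain ⟨N, hN⟩ := hv
  have hT := tendsto_prod_Icc_sub_prod_Icc hM hN h m
  have hb : IsBoundedUnder (· ≤ ·) atTop fun n => |∏ k ∈ Finset.Icc n (n + m), v k| :=
    isBoundedUnder_of ⟨N ^ (m + 1), fun n => by
      simpa [add_assoc] using abs_prod_le_pow_card (Finset.Icc n (n + m)) fun k _ => hN k⟩
  exact ⟨liminf_eq_of_tendsto_sub hb hT, limsup_eq_of_tendsto_sub hb hT⟩

section Recursion

lemma le_mul_add_prod_mul_of_succ_le {s r : ℕ → ℝ} {A : ℝ} (hA : 0 ≤ A) (hr₀ : ∀ n, 0 ≤ r n)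
    (hr₁ : ∀ n, r n ≤ 1) (hs : ∀ n, s (n + 1) ≤ A + r n * s n) (n j : ℕ) :
    s (n + j) ≤ j * A + (∏ k ∈ Finset.range j, r (n + k)) * s n := by
  induction j with
  | zero => simp
  | succ j ih =>
    have hrA : r (n + j) * (j * A) ≤ j * A :=
      mul_le_of_le_one_left (by positivity) (hr₁ _)
    calc s (n + (j + 1)) ≤ A + r (n + j) * s (n + j) := hs (n + j)
      _ ≤ A + r (n + j) * (j * A + (∏ k ∈ Finset.range j, r (n + k)) * s n) := by
        gcongr; exact hr₀ _
      _ ≤ (j + 1 : ℕ) * A + (∏ k ∈ Finset.range (j + 1), r (n + k)) * s n := by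
        rw [Finset.prod_range_succ]; push_cast; linarith

lemma exists_le_of_le_add_mul_shift {s : ℕ → ℝ} {m N : ℕ} {A c : ℝ} (hm : 0 < m)
    (hc₀ : 0 ≤ c) (hc₁ : c < 1) (hs : ∀ n ≥ N, s (n + m) ≤ A + c * s n) :
    ∃ B, ∀ n, s n ≤ B := by
  obtain ⟨B₀, hB₀⟩ := ((Finset.range (N + m)).image s).bddAbove
  refine ⟨max B₀ (A / (1 - c)), fun n => ?_⟩
  induction n using Nat.strong_induction_on with
  | _ n ih =>
    by_cases hn : n < N + m
    · exact le_max_of_le_left (hB₀ (Finset.mem_image_of_mem s (Finset.mem_range.2 hn)))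
    · obtain ⟨k, rfl⟩ : ∃ k, n = k + m := ⟨n - m, by omega⟩
      have hA : A ≤ (1 - c) * max B₀ (A / (1 - c)) := by
        rw [← div_le_iff₀' (by linarith)]; exact le_max_right _ _
      calc s (k + m) ≤ A + c * s k := hs k (by omega)
        _ ≤ A + c * max B₀ (A / (1 - c)) := by gcongr; exact ih k (by omega)
        _ ≤ max B₀ (A / (1 - c)) := by linarith

lemma tendsto_zero_of_antitone_of_le_mul_shift {w : ℕ → ℝ} {m : ℕ} {c : ℝ} (hw₀ : ∀ n, 0 ≤ w n)
    (hw : Antitone w) (hc : c < 1) (h : ∀ᶠ n in atTop, w (n + m) ≤ c * w n) :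
    Tendsto w atTop (𝓝 0) := by
  have hL := tendsto_atTop_ciInf hw ⟨0, Set.forall_mem_range.2 hw₀⟩
  have hL₀ : 0 ≤ ⨅ n, w n := le_ciInf hw₀
  have hLc : ⨅ n, w n ≤ c * ⨅ n, w n :=
    le_of_tendsto_of_tendsto (hL.comp (tendsto_add_atTop_nat m)) (hL.const_mul c) h
  rwa [show ⨅ n, w n = 0 by nlinarith] at hL

end Recursion

section HypH3

variable {μ : ℕ → ℝ}

lemma HypH3.exists_prod_le (h : HypH3 μ) (hμ : ∀ n, 0 ≤ μ n) :
    ∃ m c, 0 < m ∧ 0 ≤ c ∧ c < 1 ∧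
      ∀ᶠ n in atTop, ∏ k ∈ Finset.range m, (1 + μ (n + k))⁻¹ ≤ c := by
  obtain ⟨ω, hω⟩ := h
  obtain ⟨c, hωc, hc⟩ := exists_between hω
  have hbdd : IsBoundedUnder (· ≤ ·) atTop
      fun n => ∏ k ∈ Finset.Icc n (n + ω), (1 + μ k)⁻¹ :=
    isBoundedUnder_of ⟨1, fun n => Finset.prod_le_one (fun k _ => by have := hμ k; positivity)
      fun k _ => inv_le_one_of_one_le₀ (by linarith [hμ k])⟩
  refine ⟨ω + 1, max c 0, ω.succ_pos, le_max_right _ _, max_lt hc one_pos, ?_⟩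
  filter_upwards [eventually_lt_of_limsup_lt hωc hbdd] with n hn
  rw [← Finset.Ico_add_one_right_eq_Icc, Finset.prod_Ico_eq_prod_range, add_assoc,
    add_tsub_cancel_left] at hn
  exact hn.le.trans (le_max_left _ _)

variable (h3 : HypH3 μ) (hμ : ∀ n, 0 ≤ μ n)
include h3 hμ

lemma HypH3.exists_le_of_le_add_inv_mul {s : ℕ → ℝ} {A : ℝ} (hA : 0 ≤ A) (hs₀ : ∀ n, 0 ≤ s n)
    (hs : ∀ n, s (n + 1) ≤ A + (1 + μ n)⁻¹ * s n) : ∃ B, ∀ n, s n ≤ B := by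
  obtain ⟨m, c, hm, hc₀, hc₁, hc⟩ := h3.exists_prod_le hμ
  obtain ⟨N, hN⟩ := eventually_atTop.1 hc
  refine exists_le_of_le_add_mul_shift (N := N) (A := m * A) hm hc₀ hc₁ fun n hn => ?_
  calc s (n + m) ≤ m * A + (∏ k ∈ Finset.range m, (1 + μ (n + k))⁻¹) * s n :=
        le_mul_add_prod_mul_of_succ_le hA (fun k => by have := hμ k; positivity)
          (fun k => inv_le_one_of_one_le₀ (by linarith [hμ k])) hs n m
    _ ≤ m * A + c * s n := by gcongr; exacts [hs₀ n, hN n hn]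

lemma HypH3.tendsto_zero_of_le_inv_mul {w : ℕ → ℝ} (hw₀ : ∀ n, 0 ≤ w n)
    (hw : ∀ n, w (n + 1) ≤ (1 + μ n)⁻¹ * w n) : Tendsto w atTop (𝓝 0) := by
  obtain ⟨m, c, -, -, hc₁, hc⟩ := h3.exists_prod_le hμ
  have hinv₁ : ∀ n, (1 + μ n)⁻¹ ≤ 1 := fun n => inv_le_one_of_one_le₀ (by linarith [hμ n])
  have hanti : Antitone w := antitone_nat_of_succ_le fun n =>
    (hw n).trans (mul_le_of_le_one_left (hw₀ n) (hinv₁ n))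
  refine tendsto_zero_of_antitone_of_le_mul_shift (m := m) hw₀ hanti hc₁ ?_
  filter_upwards [hc] with n hn
  calc w (n + m) ≤ m * 0 + (∏ k ∈ Finset.range m, (1 + μ (n + k))⁻¹) * w n :=
        le_mul_add_prod_mul_of_succ_le le_rfl (fun k => by have := hμ k; positivity) hinv₁
          (by simpa using hw) n m
    _ ≤ c * w n := by rw [mul_zero, zero_add]; gcongr; exact hw₀ n

end HypH3

namespace AuxSys

variable {Lam μ p η x y : ℕ → ℝ}

lemma sub {x₁ y₁ x₂ y₂ : ℕ → ℝ} (h₁ : AuxSys Lam μ p η x₁ y₁) (h₂ : AuxSys Lam μ p η x₂ y₂) :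
    AuxSys 0 μ p η (x₁ - x₂) (y₁ - y₂) := fun n => by
  obtain ⟨hx₁, hy₁⟩ := h₁ n
  obtain ⟨hx₂, hy₂⟩ := h₂ n
  simp only [Pi.sub_apply, Pi.zero_apply]
  constructor
  · rw [hx₁, hx₂]; ring
  · rw [hy₁, hy₂]; ring

variable (hμ : ∀ n, 0 ≤ μ n) (hp : ∀ n, 0 ≤ p n) (hη : ∀ n, 0 ≤ η n)
include hμ hp hη

/-- The implicit step solved for `(x (n+1), y (n+1))`: `(1 + μ n) * (1 + μ n + p n + η n)` is the
determinant of its linear system. -/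
lemma mul_succ_eq (h : AuxSys Lam μ p η x y) (n : ℕ) :
    x (n + 1) * ((1 + μ n) * (1 + μ n + p n + η n))
        = (Lam n + x n) * (1 + μ n + η n) + η n * y n ∧
      y (n + 1) * ((1 + μ n) * (1 + μ n + p n + η n))
        = p n * (Lam n + x n) + (1 + μ n + p n) * y n := by
  obtain ⟨hx, hy⟩ := h n
  have hx' : x (n + 1) * (1 + μ n + p n) = Lam n + η n * y (n + 1) + x n := by
    rw [hx]; field_simp [show 1 + μ n + p n ≠ 0 by linarith [hμ n, hp n]]
  have hy' : y (n + 1) * (1 + μ n + η n) = p n * x (n + 1) + y n := by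
    rw [hy]; field_simp [show 1 + μ n + η n ≠ 0 by linarith [hμ n, hη n]]
  constructor
  · linear_combination (1 + μ n + η n) * hx' + η n * hy'
  · linear_combination p n * hx' + (1 + μ n + p n) * hy'

lemma nonneg (hΛ : ∀ n, 0 ≤ Lam n) (h : AuxSys Lam μ p η x y) (hx : 0 ≤ x 0) (hy : 0 ≤ y 0)
    (n : ℕ) : 0 ≤ x n ∧ 0 ≤ y n := by
  induction n with
  | zero => exact ⟨hx, hy⟩
  | succ n ih =>
    obtain ⟨hx', hy'⟩ := h.mul_succ_eq hμ hp hη n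
    have hD : 0 < (1 + μ n) * (1 + μ n + p n + η n) := by
      have := hμ n; have := hp n; have := hη n; positivity
    have hΛx : 0 ≤ Lam n + x n := add_nonneg (hΛ n) ih.1
    exact ⟨(mul_nonneg_iff_of_pos_right hD).1 (hx' ▸ add_nonneg
        (mul_nonneg hΛx (by linarith [hμ n, hη n])) (mul_nonneg (hη n) ih.2)),
      (mul_nonneg_iff_of_pos_right hD).1 (hy' ▸ add_nonneg
        (mul_nonneg (hp n) hΛx) (mul_nonneg (by linarith [hμ n, hp n]) ih.2))⟩

lemma abs_add_abs_succ_le (h : AuxSys Lam μ p η x y) (n : ℕ) :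
    |x (n + 1)| + |y (n + 1)| ≤ (1 + μ n)⁻¹ * (|Lam n| + |x n| + |y n|) := by
  obtain ⟨hx', hy'⟩ := h.mul_succ_eq hμ hp hη n
  have := hμ n; have := hp n; have := hη n
  have hD : 0 < (1 + μ n) * (1 + μ n + p n + η n) := by positivity
  have hx'' : |x (n + 1)| * ((1 + μ n) * (1 + μ n + p n + η n))
      ≤ (|Lam n| + |x n|) * (1 + μ n + η n) + η n * |y n| := by
    rw [← abs_of_pos hD, ← abs_mul, hx']
    calc _ ≤ |(Lam n + x n) * (1 + μ n + η n)| + |η n * y n| := abs_add_le _ _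
      _ ≤ _ := by
        rw [abs_mul, abs_mul, abs_of_nonneg (by positivity : 0 ≤ 1 + μ n + η n),
          abs_of_nonneg (hη n)]
        gcongr
        exact abs_add_le _ _
  have hy'' : |y (n + 1)| * ((1 + μ n) * (1 + μ n + p n + η n))
      ≤ p n * (|Lam n| + |x n|) + (1 + μ n + p n) * |y n| := by
    rw [← abs_of_pos hD, ← abs_mul, hy']
    calc _ ≤ |p n * (Lam n + x n)| + |(1 + μ n + p n) * y n| := abs_add_le _ _
      _ ≤ _ := by
        rw [abs_mul, abs_mul, abs_of_nonneg (by positivity : 0 ≤ 1 + μ n + p n),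
          abs_of_nonneg (hp n)]
        gcongr
        exact abs_add_le _ _
  rw [inv_mul_eq_div, le_div_iff₀ (by positivity)]
  refine le_of_mul_le_mul_right ?_ (by positivity : 0 < 1 + μ n + p n + η n)
  nlinarith

variable (h3 : HypH3 μ)
include h3

lemma exists_abs_add_abs_le {C : ℝ} (hΛ : ∀ n, |Lam n| ≤ C) (h : AuxSys Lam μ p η x y) :
    ∃ B, ∀ n, |x n| + |y n| ≤ B := by
  refine h3.exists_le_of_le_add_inv_mul (s := fun n => |x n| + |y n|) hμ
    ((abs_nonneg _).trans (hΛ 0)) (fun n => by positivity) fun n => ?_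
  have hinv : (1 + μ n)⁻¹ ≤ 1 := inv_le_one_of_one_le₀ (by linarith [hμ n])
  calc |x (n + 1)| + |y (n + 1)| ≤ (1 + μ n)⁻¹ * (|Lam n| + |x n| + |y n|) :=
        h.abs_add_abs_succ_le hμ hp hη n
    _ = (1 + μ n)⁻¹ * |Lam n| + (1 + μ n)⁻¹ * (|x n| + |y n|) := by ring
    _ ≤ C + (1 + μ n)⁻¹ * (|x n| + |y n|) := by
      gcongr
      exact (mul_le_of_le_one_left (abs_nonneg _) hinv).trans (hΛ n)

lemma tendsto_sub {x₁ y₁ x₂ y₂ : ℕ → ℝ} (h₁ : AuxSys Lam μ p η x₁ y₁)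
    (h₂ : AuxSys Lam μ p η x₂ y₂) :
    Tendsto (x₁ - x₂) atTop (𝓝 0) ∧ Tendsto (y₁ - y₂) atTop (𝓝 0) := by
  have hw : Tendsto (fun n => |(x₁ - x₂) n| + |(y₁ - y₂) n|) atTop (𝓝 0) :=
    h3.tendsto_zero_of_le_inv_mul hμ (fun n => by positivity) fun n => by
      simpa using (h₁.sub h₂).abs_add_abs_succ_le hμ hp hη n
  exact ⟨squeeze_zero_norm (fun n => le_add_of_nonneg_right (abs_nonneg _)) hw,
    squeeze_zero_norm (fun n => le_add_of_nonneg_left (abs_nonneg _)) hw⟩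

end AuxSys

lemma BddNonneg.isBoundedUnder_norm {u : ℕ → ℝ} (hu : BddNonneg u) {l : Filter ℕ} :
    IsBoundedUnder (· ≤ ·) l (norm ∘ u) :=
  let ⟨hu₀, C, hC⟩ := hu
  isBoundedUnder_of ⟨C, fun n => by simpa [abs_of_nonneg (hu₀ n)] using hC n⟩

namespace HypH1

variable {φ : ℝ → ℝ → ℝ} {k : ℝ}

lemma abs_d2_le (h : HypH1 φ k) {t : ℝ} (ht : 0 ≤ t) : |d2 φ t| ≤ |d2 φ 0| + |k| * |t| := by
  have hlip := h.2.2.2 t 0 ht le_rfl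
  rw [sub_zero] at hlip
  linarith [abs_sub_abs_le_abs_sub (d2 φ t) (d2 φ 0),
    mul_le_mul_of_nonneg_right (le_abs_self k) (abs_nonneg t)]

lemma tendsto_d2_sub (h : HypH1 φ k) {ι : Type*} {l : Filter ι} {u v : ι → ℝ}
    (hu : ∀ i, 0 ≤ u i) (hv : ∀ i, 0 ≤ v i) (huv : Tendsto (u - v) l (𝓝 0)) :
    Tendsto (fun i => d2 φ (u i) - d2 φ (v i)) l (𝓝 0) :=
  squeeze_zero_norm (fun i => h.2.2.2 _ _ (hu i) (hv i)) (by simpa using (huv.abs.const_mul k))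

end HypH1

def rdFactor (μ α β σ γ : ℕ → ℝ) (φ ψ : ℝ → ℝ → ℝ) (x y : ℕ → ℝ) (k : ℕ) : ℝ :=
  (1 + β k * d2 φ (x (k+1)) + σ k * d2 ψ (y (k+1))) / (1 + μ k + α k + γ k)

section rdFactor

variable {μ α β σ γ : ℕ → ℝ} {φ ψ : ℝ → ℝ → ℝ} {kφ kψ : ℝ}
  (hμ : ∀ n, 0 ≤ μ n) (hα : ∀ n, 0 ≤ α n) (hγ : ∀ n, 0 ≤ γ n)
  (hβ : BddNonneg β) (hσ : BddNonneg σ) (h1φ : HypH1 φ kφ) (h1ψ : HypH1 ψ kψ)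
include hμ hα hγ hβ hσ h1φ h1ψ

lemma exists_abs_rdFactor_le {x y : ℕ → ℝ} (h₀ : ∀ n, 0 ≤ x n ∧ 0 ≤ y n)
    (hxy : ∃ B, ∀ n, |x n| + |y n| ≤ B) : ∃ M, ∀ k, |rdFactor μ α β σ γ φ ψ x y k| ≤ M := by
  obtain ⟨hβ₀, Cβ, hCβ⟩ := hβ
  obtain ⟨hσ₀, Cσ, hCσ⟩ := hσ
  obtain ⟨B, hB⟩ := hxy
  refine ⟨1 + Cβ * (|d2 φ 0| + |kφ| * B) + Cσ * (|d2 ψ 0| + |kψ| * B), fun k => ?_⟩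
  have hD : 1 ≤ 1 + μ k + α k + γ k := by linarith [hμ k, hα k, hγ k]
  have hφ : |d2 φ (x (k + 1))| ≤ |d2 φ 0| + |kφ| * B :=
    (h1φ.abs_d2_le (h₀ _).1).trans (by gcongr; linarith [hB (k + 1), abs_nonneg (y (k + 1))])
  have hψ : |d2 ψ (y (k + 1))| ≤ |d2 ψ 0| + |kψ| * B :=
    (h1ψ.abs_d2_le (h₀ _).2).trans (by gcongr; linarith [hB (k + 1), abs_nonneg (x (k + 1))])
  rw [rdFactor, abs_div, abs_of_pos (show 0 < 1 + μ k + α k + γ k by linarith)]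
  refine (div_le_self (abs_nonneg _) hD).trans ?_
  calc _ ≤ |1 + β k * d2 φ (x (k + 1))| + |σ k * d2 ψ (y (k + 1))| := abs_add_le _ _
    _ ≤ 1 + β k * |d2 φ (x (k + 1))| + σ k * |d2 ψ (y (k + 1))| := by
      have h₁ := abs_add_le 1 (β k * d2 φ (x (k + 1)))
      rw [abs_mul, abs_of_nonneg (hβ₀ k), abs_one] at h₁
      rw [abs_mul, abs_of_nonneg (hσ₀ k)]
      linarith
    _ ≤ _ := add_le_add (add_le_add le_rfl
        (mul_le_mul (hCβ k) hφ (abs_nonneg _) ((hβ₀ 0).trans (hCβ 0))))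
        (mul_le_mul (hCσ k) hψ (abs_nonneg _) ((hσ₀ 0).trans (hCσ 0)))

lemma tendsto_rdFactor_sub {x₁ y₁ x₂ y₂ : ℕ → ℝ} (h₁ : ∀ n, 0 ≤ x₁ n ∧ 0 ≤ y₁ n)
    (h₂ : ∀ n, 0 ≤ x₂ n ∧ 0 ≤ y₂ n) (hx : Tendsto (x₁ - x₂) atTop (𝓝 0))
    (hy : Tendsto (y₁ - y₂) atTop (𝓝 0)) :
    Tendsto (rdFactor μ α β σ γ φ ψ x₁ y₁ - rdFactor μ α β σ γ φ ψ x₂ y₂) atTop (𝓝 0) := by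
  have hφ := h1φ.tendsto_d2_sub (fun n => (h₁ (n + 1)).1) (fun n => (h₂ (n + 1)).1)
    (hx.comp (tendsto_add_atTop_nat 1))
  have hψ := h1ψ.tendsto_d2_sub (fun n => (h₁ (n + 1)).2) (fun n => (h₂ (n + 1)).2)
    (hy.comp (tendsto_add_atTop_nat 1))
  have hD : IsBoundedUnder (· ≤ ·) atTop (norm ∘ fun k => (1 + μ k + α k + γ k)⁻¹) :=
    isBoundedUnder_of ⟨1, fun k => by
      have hD : 1 ≤ 1 + μ k + α k + γ k := by linarith [hμ k, hα k, hγ k]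
      simpa [abs_of_pos (by linarith : (0 : ℝ) < 1 + μ k + α k + γ k)] using
        inv_le_one_of_one_le₀ hD⟩
  have hnum := (isBoundedUnder_le_mul_tendsto_zero hβ.isBoundedUnder_norm hφ).add
    (isBoundedUnder_le_mul_tendsto_zero hσ.isBoundedUnder_norm hψ)
  rw [add_zero] at hnum
  convert hnum.zero_mul_isBoundedUnder_le hD using 2 with k
  simp only [Pi.sub_apply, rdFactor]
  ring

end rdFactor

theorem statement4_general
    (Lam μ p η α β σ γ : ℕ → ℝ) (φ ψ : ℝ → ℝ → ℝ) (kφ kψ : ℝ)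
    (hbn : BddNonneg Lam ∧ BddNonneg μ ∧ BddNonneg p ∧ BddNonneg η ∧
           BddNonneg α ∧ BddNonneg β ∧ BddNonneg σ ∧ BddNonneg γ)
    (h1φ : HypH1 φ kφ) (h1ψ : HypH1 ψ kψ)
    (h3 : HypH3 μ)
    (x₁ y₁ x₂ y₂ : ℕ → ℝ)
    (haux₁ : AuxSys Lam μ p η x₁ y₁) (haux₂ : AuxSys Lam μ p η x₂ y₂)
    (hx₁ : 0 < x₁ 0) (hy₁ : 0 < y₁ 0) (hx₂ : 0 < x₂ 0) (hy₂ : 0 < y₂ 0) :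
    ∀ lam : ℕ,
      RDl μ α β σ γ φ ψ x₁ y₁ lam = RDl μ α β σ γ φ ψ x₂ y₂ lam ∧
      RDu μ α β σ γ φ ψ x₁ y₁ lam = RDu μ α β σ γ φ ψ x₂ y₂ lam := by
  obtain ⟨⟨hΛ, CΛ, hCΛ⟩, ⟨hμ, -⟩, ⟨hp, -⟩, ⟨hη, -⟩, ⟨hα, -⟩, hβ, hσ, ⟨hγ, -⟩⟩ := hbn
  have hΛC : ∀ n, |Lam n| ≤ CΛ := fun n => (abs_of_nonneg (hΛ n)).trans_le (hCΛ n)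
  have hsol₁ := haux₁.nonneg hμ hp hη hΛ hx₁.le hy₁.le
  have hsol₂ := haux₂.nonneg hμ hp hη hΛ hx₂.le hy₂.le
  obtain ⟨hx, hy⟩ := haux₁.tendsto_sub hμ hp hη h3 haux₂
  exact liminf_limsup_prod_Icc_eq
    (exists_abs_rdFactor_le hμ hα hγ hβ hσ h1φ h1ψ hsol₁
      (haux₁.exists_abs_add_abs_le hμ hp hη h3 hΛC))
    (exists_abs_rdFactor_le hμ hα hγ hβ hσ h1φ h1ψ hsol₂
      (haux₂.exists_abs_add_abs_le hμ hp hη h3 hΛC))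
    (tendsto_rdFactor_sub hμ hα hγ hβ hσ h1φ h1ψ hsol₁ hsol₂ hx hy)

/-- The thresholds `R_D^ℓ(ξ*, λ)` and `R_D^u(ξ*, λ)` do not depend on the chosen positive
solution of the auxiliary system. -/
theorem statement4
    (Lam μ p η α β σ γ : ℕ → ℝ) (φ ψ : ℝ → ℝ → ℝ) (kφ kψ : ℝ)
    (hbn : BddNonneg Lam ∧ BddNonneg μ ∧ BddNonneg p ∧ BddNonneg η ∧
           BddNonneg α ∧ BddNonneg β ∧ BddNonneg σ ∧ BddNonneg γ)
    (h1φ : HypH1 φ kφ) (h1ψ : HypH1 ψ kψ)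
    (h2 : HypH2 φ ψ)
    (h3 : HypH3 μ) (h4 : HypH4 Lam p)
    (x₁ y₁ x₂ y₂ : ℕ → ℝ)
    (haux₁ : AuxSys Lam μ p η x₁ y₁) (haux₂ : AuxSys Lam μ p η x₂ y₂)
    (hx₁ : 0 < x₁ 0) (hy₁ : 0 < y₁ 0) (hx₂ : 0 < x₂ 0) (hy₂ : 0 < y₂ 0) :
    ∀ lam : ℕ,
      RDl μ α β σ γ φ ψ x₁ y₁ lam = RDl μ α β σ γ φ ψ x₂ y₂ lam ∧
      RDu μ α β σ γ φ ψ x₁ y₁ lam = RDu μ α β σ γ φ ψ x₂ y₂ lam :=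
  statement4_general Lam μ p η α β σ γ φ ψ kφ kψ hbn h1φ h1ψ h3 x₁ y₁ x₂ y₂ haux₁ haux₂ hx₁ hy₁ hx₂
    hy₂
end
end

section
/- (Inconsistency example.) Let L be a positive integer, let μ, α, γ > 0, and let d, c be real numbers with 0 < d < μ + α + γ and c > (2/d)(μ + γ + α − d). Define β : ℝ → ℝ by β(t) = d·(1 + c·sin²(2πL t)·(1 + cos(2π t))). Then: (i) β(k/L) = d for every integer k; (ii) ∫_0^1 β(s) ds − (μ + α + γ) = d(1 + c/2) − (μ + α + γ) > 0, so the continuous-time threshold over one period is positive; (iii) for every n, ∏_{k=n}^{n+L} (1 + (1/L)β(k/L))/(1 + (1/L)(μ + α + γ)) = ((1 + d/L)/(1 + (μ+α+γ)/L))^{L+1} < 1, so the discrete-time threshold with time step 1/L is less than 1. -/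
open Real

lemma intcos_aux (r : ℝ) (hr : r ≠ 0) (hs : Real.sin (2 * π * r) = 0) :
    (∫ t in (0:ℝ)..1, Real.cos (2 * π * r * t)) = 0 := by
  have h2 : (2 * π * r) ≠ 0 := by
    have : (2 * π) ≠ 0 := by positivity
    exact mul_ne_zero this hr
  have := intervalIntegral.integral_comp_mul_left (a := (0:ℝ)) (b := 1)
    (f := fun x => Real.cos x) (c := 2 * π * r) h2
  simp only [mul_zero, mul_one, integral_cos, Real.sin_zero, sub_zero, smul_eq_mul] at this
  rw [this, hs, mul_zero]

/-- Inconsistency example: the continuous one-period threshold is positive while the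
discrete threshold with time step `1/L` is less than `1`. -/
theorem statement14 (L : ℕ) (hL : 0 < L) (μ α γ d c : ℝ)
    (hμ : 0 < μ) (hα : 0 < α) (hγ : 0 < γ)
    (hd0 : 0 < d) (hd : d < μ + α + γ) (hc : 2 / d * (μ + γ + α - d) < c)
    (β : ℝ → ℝ)
    (hβ : ∀ t : ℝ, β t = d * (1 + c * Real.sin (2 * Real.pi * L * t) ^ 2 *
      (1 + Real.cos (2 * Real.pi * t)))) :
    (∀ k : ℤ, β ((k : ℝ) / (L : ℝ)) = d) ∧
    ((∫ s in (0:ℝ)..1, β s) - (μ + α + γ) = d * (1 + c / 2) - (μ + α + γ) ∧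
      0 < (∫ s in (0:ℝ)..1, β s) - (μ + α + γ)) ∧
    (∀ n : ℕ,
      (∏ k ∈ Finset.Icc n (n + L),
        (1 + (1 / (L : ℝ)) * β ((k : ℝ) / (L : ℝ))) / (1 + (1 / (L : ℝ)) * (μ + α + γ)))
        = ((1 + d / (L : ℝ)) / (1 + (μ + α + γ) / (L : ℝ))) ^ (L + 1) ∧
      ((1 + d / (L : ℝ)) / (1 + (μ + α + γ) / (L : ℝ))) ^ (L + 1) < 1) := by
  have hLR : (L : ℝ) ≠ 0 := Nat.cast_ne_zero.mpr hL.ne'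
  have hLR0 : (0:ℝ) < L := Nat.cast_pos.mpr hL
  -- Part (i)
  have part1 : ∀ k : ℤ, β ((k : ℝ) / (L : ℝ)) = d := by
    intro k
    rw [hβ]
    have harg : 2 * Real.pi * L * ((k : ℝ) / (L : ℝ)) = (2 * k : ℤ) * π := by
      push_cast
      field_simp
    rw [harg, Real.sin_int_mul_pi]
    ring
  have hIntegral : (∫ s in (0:ℝ)..1, β s) = d * (1 + c / 2) := by
    have key : ∀ t : ℝ, β t =
        (d + d * c / 2) + ((d * c / 2) * Real.cos (2 * π * 1 * t)
          + (-(d * c / 2)) * Real.cos (2 * π * (2 * (L:ℝ)) * t)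
          + (-(d * c / 4)) * Real.cos (2 * π * (2 * (L:ℝ) + 1) * t)
          + (-(d * c / 4)) * Real.cos (2 * π * (2 * (L:ℝ) - 1) * t)) := by
      intro t
      rw [hβ]
      set A := 2 * π * (L:ℝ) * t with hA
      have e1 : 2 * π * (2 * (L:ℝ)) * t = 2 * A := by rw [hA]; ring
      have e2 : 2 * π * (2 * (L:ℝ) + 1) * t = 2 * A + 2 * π * t := by rw [hA]; ring
      have e3 : 2 * π * (2 * (L:ℝ) - 1) * t = 2 * A - 2 * π * t := by rw [hA]; ring
      have e4 : 2 * π * 1 * t = 2 * π * t := by ring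
      rw [e1, e2, e3, e4, Real.cos_add, Real.cos_sub, Real.cos_two_mul, Real.sin_two_mul]
      linear_combination (d * c * (1 + Real.cos (2 * π * t))) * (Real.sin_sq_add_cos_sq A)
    rw [intervalIntegral.integral_congr (g := fun t =>
      (d + d * c / 2) + ((d * c / 2) * Real.cos (2 * π * 1 * t)
        + (-(d * c / 2)) * Real.cos (2 * π * (2 * (L:ℝ)) * t)
        + (-(d * c / 4)) * Real.cos (2 * π * (2 * (L:ℝ) + 1) * t)
        + (-(d * c / 4)) * Real.cos (2 * π * (2 * (L:ℝ) - 1) * t)))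
      (fun t _ => key t)]
    have hcont : ∀ r : ℝ, Continuous (fun t : ℝ => Real.cos (2 * π * r * t)) := by
      intro r; exact Real.continuous_cos.comp (continuous_const.mul continuous_id)
    have hic : ∀ r q : ℝ, IntervalIntegrable (fun t : ℝ => q * Real.cos (2 * π * r * t))
        MeasureTheory.volume 0 1 := fun r q =>
      (continuous_const.mul (hcont r)).intervalIntegrable 0 1
    have hsin : ∀ n : ℤ, Real.sin (2 * π * (n:ℝ)) = 0 := by
      intro n
      have : 2 * π * (n:ℝ) = (2 * n : ℤ) * π := by push_cast; ring
      rw [this, Real.sin_int_mul_pi]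
    have c1 : ((1:ℝ)) ≠ 0 := one_ne_zero
    have I1 : (∫ t in (0:ℝ)..1, Real.cos (2 * π * 1 * t)) = 0 :=
      intcos_aux 1 one_ne_zero (by simpa using hsin 1)
    have I2 : (∫ t in (0:ℝ)..1, Real.cos (2 * π * (2 * (L:ℝ)) * t)) = 0 :=
      intcos_aux _ (by positivity) (by
        have := hsin (2 * L); push_cast at this ⊢; convert this using 3)
    have I3 : (∫ t in (0:ℝ)..1, Real.cos (2 * π * (2 * (L:ℝ) + 1) * t)) = 0 :=
      intcos_aux _ (by positivity) (by
        have := hsin (2 * L + 1); push_cast at this ⊢; convert this using 3)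
    have I4 : (∫ t in (0:ℝ)..1, Real.cos (2 * π * (2 * (L:ℝ) - 1) * t)) = 0 :=
      intcos_aux _ (by
        have : (1:ℝ) ≤ (L:ℝ) := by exact_mod_cast hL
        nlinarith) (by
        have := hsin (2 * L - 1); push_cast at this ⊢; convert this using 3)
    rw [intervalIntegral.integral_add (intervalIntegrable_const)
      ((((hic _ _).add (hic _ _)).add (hic _ _)).add (hic _ _)),
      intervalIntegral.integral_add (((hic _ _).add (hic _ _)).add (hic _ _)) (hic _ _),
      intervalIntegral.integral_add ((hic _ _).add (hic _ _)) (hic _ _),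
      intervalIntegral.integral_add (hic _ _) (hic _ _)]
    simp only [intervalIntegral.integral_const_mul, I1, I2, I3, I4]
    simp
    ring
  refine ⟨part1, ⟨by rw [hIntegral], ?_⟩, ?_⟩
  · -- positivity
    have h' : 2 * (μ + γ + α - d) < c * d := by
      have h0 := (div_lt_iff₀ hd0).mp (by rw [← div_mul_eq_mul_div]; exact hc)
      linarith
    rw [hIntegral]
    nlinarith
  · -- product
    intro n
    have hfac : ∀ k ∈ Finset.Icc n (n + L),
        (1 + (1 / (L : ℝ)) * β ((k : ℝ) / (L : ℝ))) / (1 + (1 / (L : ℝ)) * (μ + α + γ))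
          = (1 + d / (L : ℝ)) / (1 + (μ + α + γ) / (L : ℝ)) := by
      intro k _
      have : β ((k : ℝ) / (L : ℝ)) = d := by
        have := part1 (k : ℤ)
        simpa using this
      rw [this]
      congr 1 <;> ring
    rw [Finset.prod_congr rfl hfac, Finset.prod_const, Nat.card_Icc]
    have hcard : n + L + 1 - n = L + 1 := by omega
    rw [hcard]
    refine ⟨rfl, ?_⟩
    have hden : (0:ℝ) < 1 + (μ + α + γ) / (L : ℝ) := by positivity
    have hbase : (1 + d / (L : ℝ)) / (1 + (μ + α + γ) / (L : ℝ)) < 1 := by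
      rw [div_lt_one hden]
      have : d / (L:ℝ) < (μ + α + γ) / (L:ℝ) := by gcongr
      linarith
    exact pow_lt_one₀ (by positivity) hbase (Nat.succ_ne_zero L)
end

section
/- Let (μ_n) and (γ_n) be bounded nonnegative real sequences, and assume there is ω_μ ∈ ℕ such that limsup_{n→∞} ∏_{k=n}^{n+ω_μ} 1/(1+μ_k) < 1. Let (ι_n) be a real sequence with ι_n → 0 as n → ∞, and let (ρ_n) be a real sequence satisfying ρ_{n+1} = (γ_n ι_{n+1} + ρ_n)/(1 + μ_n) for all n ∈ ℕ. Then ρ_n → 0 as n → ∞. -/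
open Filter Finset

/-- If `ι_n → 0` and `ρ_{n+1} = (γ_n ι_{n+1} + ρ_n)/(1 + μ_n)` with `(μ_n)` satisfying the
limsup-product condition, then `ρ_n → 0`. -/
theorem statement16 (μ γ : ℕ → ℝ)
    (hμnn : ∀ n, 0 ≤ μ n) (hμb : ∃ C : ℝ, ∀ n, μ n ≤ C)
    (hγnn : ∀ n, 0 ≤ γ n) (hγb : ∃ C : ℝ, ∀ n, γ n ≤ C)
    (ωμ : ℕ)
    (h3 : Filter.limsup
      (fun n => ∏ k ∈ Finset.Icc n (n + ωμ), (1 + μ k)⁻¹) Filter.atTop < 1)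
    (ι ρ : ℕ → ℝ) (hι : Filter.Tendsto ι Filter.atTop (nhds 0))
    (hρ : ∀ n : ℕ, ρ (n+1) = (γ n * ι (n+1) + ρ n) / (1 + μ n)) :
    Filter.Tendsto ρ Filter.atTop (nhds 0) := by
  obtain ⟨Cγ, hCγ⟩ := hγb
  set C : ℝ := max Cγ 0 with hC
  have hC0 : 0 ≤ C := le_max_right _ _
  have hCγ' : ∀ n, γ n ≤ C := fun n => le_trans (hCγ n) (le_max_left _ _)
  set a : ℕ → ℝ := fun n => (1 + μ n)⁻¹ with ha
  have hden : ∀ n, (0:ℝ) < 1 + μ n := fun n => by linarith [hμnn n]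
  have hapos : ∀ n, 0 < a n := fun n => inv_pos.2 (hden n)
  have hale : ∀ n, a n ≤ 1 := fun n => inv_le_one_of_one_le₀ (by linarith [hμnn n])
  set e : ℕ → ℝ := fun n => C * |ι (n+1)| with he
  have he0 : ∀ n, 0 ≤ e n := fun n => mul_nonneg hC0 (abs_nonneg _)
  -- one-step bound
  have hstep : ∀ n, |ρ (n+1)| ≤ a n * |ρ n| + e n := by
    intro n
    have h1 : |ρ (n+1)| = |γ n * ι (n+1) + ρ n| * a n := by
      rw [hρ n, abs_div, abs_of_pos (hden n), div_eq_mul_inv]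
    have h2 : |γ n * ι (n+1) + ρ n| ≤ γ n * |ι (n+1)| + |ρ n| := by
      calc |γ n * ι (n+1) + ρ n| ≤ |γ n * ι (n+1)| + |ρ n| := abs_add_le _ _
        _ = γ n * |ι (n+1)| + |ρ n| := by rw [abs_mul, abs_of_nonneg (hγnn n)]
    rw [h1]
    have h3' : |γ n * ι (n+1) + ρ n| * a n ≤ (γ n * |ι (n+1)| + |ρ n|) * a n :=
      mul_le_mul_of_nonneg_right h2 (hapos n).le
    have h4 : γ n * |ι (n+1)| * a n ≤ e n := by
      have := hCγ' n
      have h5 := hale n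
      have h6 := (hapos n).le
      have h7 := abs_nonneg (ι (n+1))
      have h8 := hγnn n
      show γ n * |ι (n+1)| * a n ≤ C * |ι (n+1)|
      nlinarith [mul_le_mul_of_nonneg_right (mul_le_mul this h5 h6 hC0) h7]
    nlinarith [mul_le_mul_of_nonneg_right (hale n) (abs_nonneg (ρ n)),
      (hapos n).le, abs_nonneg (ρ n)]
  -- iterated bound
  have hmain : ∀ n m : ℕ, |ρ (n+m)| ≤ (∏ k ∈ Ico n (n+m), a k) * |ρ n| +
      ∑ k ∈ Ico n (n+m), e k := by
    intro n m
    induction m with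
    | zero => simp
    | succ m ih =>
      have hP0 : 0 ≤ ∏ k ∈ Ico n (n+m), a k := prod_nonneg fun k _ => (hapos k).le
      have hS0 : 0 ≤ ∑ k ∈ Ico n (n+m), e k := sum_nonneg fun k _ => he0 k
      have h1 : |ρ (n+m+1)| ≤ a (n+m) * |ρ (n+m)| + e (n+m) := hstep (n+m)
      have h2 : a (n+m) * |ρ (n+m)| ≤ a (n+m) * ((∏ k ∈ Ico n (n+m), a k) * |ρ n| +
          ∑ k ∈ Ico n (n+m), e k) := mul_le_mul_of_nonneg_left ih (hapos (n+m)).le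
      rw [show n + (m+1) = (n+m) + 1 from by ring, Finset.prod_Ico_succ_top (by omega),
        Finset.sum_Ico_succ_top (by omega)]
      have h5 := hale (n+m)
      have h6 := (hapos (n+m)).le
      nlinarith [abs_nonneg (ρ n), mul_le_mul_of_nonneg_right h5 hS0]
  -- products are at most 1
  have hprodle1 : ∀ s : Finset ℕ, (∏ k ∈ s, a k) ≤ 1 :=
    fun s => Finset.prod_le_one (fun k _ => (hapos k).le) (fun k _ => hale k)
  -- contraction factor
  have hbdd : IsBoundedUnder (· ≤ ·) atTop
      (fun n => ∏ k ∈ Finset.Icc n (n + ωμ), (1 + μ k)⁻¹) :=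
    isBoundedUnder_of ⟨1, fun n => hprodle1 _⟩
  set q : ℝ := (Filter.limsup
      (fun n => ∏ k ∈ Finset.Icc n (n + ωμ), (1 + μ k)⁻¹) Filter.atTop + 1)/2 with hq
  have hq1 : q < 1 := by rw [hq]; linarith
  have hev : ∀ᶠ n in atTop, (∏ k ∈ Finset.Icc n (n + ωμ), (1 + μ k)⁻¹) < q := by
    apply Filter.eventually_lt_of_limsup_lt _ hbdd
    rw [hq]; linarith
  obtain ⟨N₀, hN₀⟩ := eventually_atTop.1 hev
  have hq0 : 0 ≤ q :=
    le_of_lt (lt_of_lt_of_le (prod_pos fun k _ => hapos k) (hN₀ N₀ le_rfl).le)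
  set L : ℕ := ωμ + 1 with hL
  have hLpos : (0:ℝ) < L := by positivity
  have hblockprod : ∀ n, N₀ ≤ n → (∏ k ∈ Ico n (n+L), a k) ≤ q := by
    intro n hn
    have : Ico n (n + L) = Finset.Icc n (n + ωμ) := by
      rw [hL, ← Finset.Ico_add_one_right_eq_Icc]; rfl
    rw [this]
    exact (hN₀ n hn).le
  -- e tends to 0
  have he0' : Tendsto e atTop (nhds 0) := by
    have h1 : Tendsto (fun n => ι (n+1)) atTop (nhds 0) :=
      hι.comp (tendsto_add_atTop_nat 1)
    have h2 := (h1.abs).const_mul C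
    simpa using h2
  -- main epsilon argument
  rw [Metric.tendsto_atTop]
  intro ε hε
  have h1q : 0 < 1 - q := by linarith
  set δ : ℝ := ε * (1 - q) / (4 * L) with hδdef
  have hδ : 0 < δ := by positivity
  obtain ⟨N₁, hN₁⟩ := Metric.tendsto_atTop.1 he0' δ hδ
  have heδ : ∀ k, N₁ ≤ k → e k ≤ δ := by
    intro k hk
    have := hN₁ k hk
    rw [Real.dist_eq, sub_zero, abs_of_nonneg (he0 k)] at this
    exact this.le
  set N : ℕ := max N₀ N₁ with hN
  -- sum bound over a window of length ≤ L
  have hsum : ∀ n m : ℕ, N ≤ n → m ≤ L → (∑ k ∈ Ico n (n+m), e k) ≤ L * δ := by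
    intro n m hn hm
    calc (∑ k ∈ Ico n (n+m), e k) ≤ ∑ k ∈ Ico n (n+m), δ := by
          apply Finset.sum_le_sum
          intro k hk
          exact heδ k (le_trans (le_trans (le_max_right _ _) hn) (Finset.mem_Ico.1 hk).1)
      _ ≤ (m:ℝ) * δ := by rw [Finset.sum_const, Nat.card_Ico, Nat.add_sub_cancel_left, nsmul_eq_mul]
      _ ≤ L * δ := by
          apply mul_le_mul_of_nonneg_right _ hδ.le
          exact_mod_cast hm
  set s : ℕ → ℝ := fun m => |ρ (N + m * L)| with hs
  have hs0 : ∀ m, 0 ≤ s m := fun m => abs_nonneg _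
  have hblock : ∀ m, s (m+1) ≤ q * s m + L * δ := by
    intro m
    have h1 : N + (m+1) * L = (N + m * L) + L := by ring
    have h2 := hmain (N + m * L) L
    have h3 : (∏ k ∈ Ico (N + m*L) (N + m*L + L), a k) ≤ q :=
      hblockprod _ (le_trans (le_trans (le_max_left _ _) (Nat.le_add_right _ _)) le_rfl)
    have h4 : (∑ k ∈ Ico (N + m*L) (N + m*L + L), e k) ≤ L * δ :=
      hsum _ L (Nat.le_add_right _ _) le_rfl
    have h5 : (∏ k ∈ Ico (N + m*L) (N + m*L + L), a k) * |ρ (N + m*L)| ≤ q * s m :=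
      mul_le_mul_of_nonneg_right h3 (abs_nonneg _) |>.trans_eq rfl
    rw [hs]; simp only
    rw [h1]
    calc |ρ (N + m*L + L)| ≤ _ := h2
      _ ≤ q * s m + L * δ := by
          apply add_le_add _ h4
          exact mul_le_mul h3 le_rfl (abs_nonneg _) hq0
  set B : ℝ := L * δ / (1 - q) with hB
  have hB0 : 0 ≤ B := by positivity
  have hgeo : ∀ m, s m ≤ q ^ m * s 0 + B := by
    intro m
    induction m with
    | zero => simp [hB0]
    | succ m ih =>
      have h1 := hblock m
      have h2 : q * s m ≤ q * (q ^ m * s 0 + B) := mul_le_mul_of_nonneg_left ih hq0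
      have hne : (1:ℝ) - q ≠ 0 := h1q.ne'
      have h3 : q * B + L * δ = B := by
        rw [hB]; field_simp; ring
      calc s (m+1) ≤ q * (q^m * s 0 + B) + L * δ := by linarith
        _ = q^(m+1) * s 0 + (q * B + L * δ) := by ring
        _ ≤ q^(m+1) * s 0 + B := by linarith
  -- choose m₀ such that q^m₀ * s 0 < ε/4
  have hpow : Tendsto (fun m => q ^ m * s 0) atTop (nhds 0) := by
    have := (tendsto_pow_atTop_nhds_zero_of_lt_one hq0 hq1).mul_const (s 0)
    simpa using this
  obtain ⟨m₀, hm₀⟩ := eventually_atTop.1 (hpow.eventually (gt_mem_nhds (show (0:ℝ) < ε/4 by linarith)))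
  refine ⟨N + m₀ * L, fun n hn => ?_⟩
  -- decompose n
  set d : ℕ := n - N with hd
  have hdn : n = N + d := by omega
  set m : ℕ := d / L with hm
  set j : ℕ := d % L with hj
  have hjL : j < L := Nat.mod_lt _ (by omega)
  have hdm : d = m * L + j := by rw [hm, hj]; exact (Nat.div_add_mod' d L).symm
  have hm0L : m₀ * L ≤ d := by
    have h := Nat.sub_le_sub_right hn N
    rwa [Nat.add_sub_cancel_left, ← hd] at h
  have hmm₀ : m₀ ≤ m := by
    rw [hm]
    exact (Nat.le_div_iff_mul_le (by omega : 0 < L)).2 hm0L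
  have hn' : n = (N + m * L) + j := by rw [hdn, hdm, add_assoc]
  have h1 : |ρ n| ≤ (∏ k ∈ Ico (N + m*L) (N + m*L + j), a k) * s m +
      ∑ k ∈ Ico (N + m*L) (N + m*L + j), e k := by
    rw [hn']; exact hmain _ _
  have h2 : (∏ k ∈ Ico (N + m*L) (N + m*L + j), a k) * s m ≤ s m := by
    have h := mul_le_mul_of_nonneg_right (hprodle1 (Ico (N + m*L) (N + m*L + j))) (hs0 m)
    rwa [one_mul] at h
  have h3 : (∑ k ∈ Ico (N + m*L) (N + m*L + j), e k) ≤ L * δ :=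
    hsum _ j (Nat.le_add_right _ _) hjL.le
  have h4 : s m ≤ q^m * s 0 + B := hgeo m
  have h5 : q^m * s 0 ≤ q^m₀ * s 0 := by
    apply mul_le_mul_of_nonneg_right _ (hs0 0)
    exact pow_le_pow_of_le_one hq0 hq1.le hmm₀
  have h6 : q^m₀ * s 0 < ε/4 := hm₀ m₀ le_rfl
  have hne : (1:ℝ) - q ≠ 0 := h1q.ne'
  have h7 : B = ε/4 := by
    rw [hB, hδdef]; field_simp
  have h8 : (L:ℝ) * δ ≤ ε/4 := by
    have heq : (L:ℝ) * δ = ε*(1-q)/4 := by rw [hδdef]; field_simp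
    rw [heq]; nlinarith
  rw [Real.dist_eq, sub_zero]
  linarith
end

section
/- Assume the parameter sequences (Λ_n), (μ_n), (p_n), (η_n) are bounded, nonnegative and ω-periodic for some ω ∈ ℕ, and satisfy: there is ω_μ ∈ ℕ with limsup_{n→∞} ∏_{k=n}^{n+ω_μ} 1/(1+μ_k) < 1, and there are ω_Λ, ω_p ∈ ℕ with liminf_{n→∞} Σ_{k=n+1}^{n+ω_Λ} Λ_k > 0 and liminf_{n→∞} Σ_{k=n+1}^{n+ω_p} p_k > 0. Then the auxiliary system has a unique positive ω-periodic solution (x*_n, y*_n), and this solution is globally attractive: every solution (x_n, y_n) of the auxiliary system with x_0 ≥ 0, y_0 ≥ 0 satisfies x_n − x*_n → 0 and y_n − y*_n → 0 as n → ∞. -/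
open Filter

open Topology Finset NNReal Function Set

/-!
Solving the implicit step for `(x_{n+1}, y_{n+1})` gives an affine map whose matrix has
nonnegative entries and column sums `1 / (1 + μ_n)`, so it is a contraction of ratio
`1 / (1 + μ_n)` for the `ℓ¹` distance and preserves the closed nonnegative quadrant. The
composite over one period is therefore a contraction of ratio `∏_{k < ω} 1 / (1 + μ_k) < 1`
(some `μ_k` is positive because of the limsup condition). Banach's fixed point theorem gives
the unique periodic solution, which is nonnegative, and since the period map contracts
geometrically while the partial-period maps have bounded Lipschitz constants, every solution
converges to it. Positivity follows because `x` becomes positive after a step with `Λ_n > 0`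
and stays positive, `y` becomes positive after a step with `p_n > 0`, and periodicity carries
positivity back to all indices.
-/

namespace Nonautonomous

variable {X : Type*}

def orbit (T : ℕ → X → X) (z : X) : ℕ → X
  | 0 => z
  | n + 1 => T n (orbit T z n)

variable {T : ℕ → X → X}

@[simp] lemma orbit_zero (z : X) : orbit T z 0 = z := rfl

@[simp] lemma orbit_succ (z : X) (n : ℕ) : orbit T z (n + 1) = T n (orbit T z n) := rfl

lemma eq_orbit_iff {u : ℕ → X} :
    (∀ n, u n = orbit T (u 0) n) ↔ ∀ n, u (n + 1) = T n (u n) := by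
  refine ⟨fun h n => by rw [h (n + 1), h n, orbit_succ], fun h n => ?_⟩
  induction n with
  | zero => rfl
  | succ n ih => rw [h n, ih, orbit_succ]

lemma mapsTo_orbit {s : Set X} (hs : ∀ n, MapsTo (T n) s s) (n : ℕ) :
    MapsTo (orbit T · n) s s := by
  induction n with
  | zero => exact mapsTo_id s
  | succ n ih => exact (hs n).comp ih

variable {ω : ℕ}

lemma orbit_add_period (hT : Periodic T ω) (z : X) (n : ℕ) :
    orbit T z (n + ω) = orbit T (orbit T z ω) n := by
  induction n with
  | zero => simp
  | succ n ih => rw [Nat.add_right_comm, orbit_succ, ih, hT, orbit_succ]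

lemma orbit_add_mul_period (hT : Periodic T ω) (z : X) (n j : ℕ) :
    orbit T z (n + j * ω) = orbit T ((orbit T · ω)^[j] z) n := by
  induction j generalizing z with
  | zero => simp
  | succ j ih => rw [Nat.succ_mul, ← add_assoc, orbit_add_period hT, ih, iterate_succ_apply]

variable [MetricSpace X] {K : ℕ → ℝ≥0}

lemma lipschitzWith_orbit (hK : ∀ n, LipschitzWith (K n) (T n)) (n : ℕ) :
    LipschitzWith (∏ k ∈ range n, K k) (orbit T · n) := by
  induction n with
  | zero => simp only [prod_range_zero]; exact LipschitzWith.id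
  | succ n ih => rw [prod_range_succ, mul_comm]; exact (hK n).comp ih

/-- After `j` full periods the distance has shrunk by the factor `r ^ j`; within a period it
grows at most by the factor `M`. -/
lemma tendsto_dist_orbit (hω : 0 < ω) (hT : Periodic T ω)
    (hK : ∀ n, LipschitzWith (K n) (T n)) (hKω : ContractingWith (∏ k ∈ range ω, K k) (orbit T · ω))
    {z : X} (hz : IsFixedPt (orbit T · ω) z) (z' : X) :
    Tendsto (fun n => dist (orbit T z' n) (orbit T z n)) atTop (𝓝 0) := by
  set r := ∏ k ∈ range ω, K k
  set M := ∑ i ∈ range ω, ∏ k ∈ range i, K k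
  have hbound : ∀ n, dist (orbit T z' n) (orbit T z n) ≤ M * ((r : ℝ) ^ (n / ω) * dist z' z) := by
    intro n
    rw [← Nat.mod_add_div' n ω, orbit_add_mul_period hT, orbit_add_mul_period hT, hz.iterate,
      Nat.add_mul_div_right _ _ hω, Nat.mod_div_self, zero_add]
    calc dist (orbit T ((orbit T · ω)^[n / ω] z') (n % ω)) (orbit T z (n % ω))
        ≤ (∏ k ∈ range (n % ω), K k) * dist ((orbit T · ω)^[n / ω] z') z := by
          exact (lipschitzWith_orbit hK (n % ω)).dist_le_mul _ _
      _ ≤ M * ((r : ℝ) ^ (n / ω) * dist z' z) := by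
          gcongr
          · exact_mod_cast single_le_sum (f := fun i => ∏ k ∈ range i, K k) (fun _ _ => zero_le)
              (mem_range.2 (Nat.mod_lt n hω))
          · simpa only [(hz.iterate _).eq, NNReal.coe_pow] using
              (hKω.2.iterate (n / ω)).dist_le_mul z' z
  refine squeeze_zero (fun n => dist_nonneg) hbound ?_
  have hr : Tendsto (fun n => (r : ℝ) ^ (n / ω)) atTop (𝓝 0) :=
    (tendsto_pow_atTop_nhds_zero_of_lt_one r.2 hKω.1).comp (Nat.tendsto_div_const_atTop hω.ne')
  simpa using (hr.mul_const (dist z' z)).const_mul (M : ℝ)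

end Nonautonomous

lemma Function.Periodic.pos_of_succ_pos {u : ℕ → ℝ} {ω k : ℕ} (hu : Periodic u ω) (hω : 0 < ω)
    (hk : 0 < u k) (hsucc : ∀ n, 0 < u n → 0 < u (n + 1)) (n : ℕ) : 0 < u n := by
  rw [← hu.nat_mul k n]
  exact Nat.le_induction (P := fun m _ => 0 < u m) hk (fun m _ => hsucc m) _ (by nlinarith)

lemma exists_pos_of_limsup_prod_lt_one {μ : ℕ → ℝ} (hm : ∀ n, 0 ≤ μ n) {N : ℕ}
    (h : limsup (fun n => ∏ k ∈ Icc n (n + N), (1 + μ k)⁻¹) atTop < 1) : ∃ k, 0 < μ k := by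
  by_contra! hμ
  obtain rfl : μ = 0 := funext fun k => le_antisymm (hμ k) (hm k)
  simp at h

lemma exists_pos_of_liminf_sum_pos {u : ℕ → ℝ} (hu : ∀ n, 0 ≤ u n) {N : ℕ}
    (h : 0 < liminf (fun n => ∑ k ∈ Icc (n + 1) (n + N), u k) atTop) : ∃ k, 0 < u k := by
  by_contra! hpos
  obtain rfl : u = 0 := funext fun k => le_antisymm (hpos k) (hu k)
  simp at h

lemma abs_mul_add_mul_le {a b x y : ℝ} (ha : 0 ≤ a) (hb : 0 ≤ b) :
    |a * x + b * y| ≤ a * |x| + b * |y| := by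
  simpa only [abs_mul, abs_of_nonneg ha, abs_of_nonneg hb] using abs_add_le (a * x) (b * y)

namespace AuxSys

open Nonautonomous

variable {Lam μ p η : ℕ → ℝ} {n : ℕ}

/-- The implicit step of the system solved by Cramer's rule; its determinant
`(1 + μ + p) (1 + μ + η) - η p` factors as `(1 + μ) (1 + μ + η + p)`. -/
noncomputable def step (Lam μ p η : ℕ → ℝ) (n : ℕ) (z : WithLp 1 (ℝ × ℝ)) : WithLp 1 (ℝ × ℝ) :=
  WithLp.toLp 1
    (((1 + μ n + η n) * (Lam n + z.fst) + η n * z.snd) / ((1 + μ n) * (1 + μ n + η n + p n)),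
     (p n * (Lam n + z.fst) + (1 + μ n + p n) * z.snd) / ((1 + μ n) * (1 + μ n + η n + p n)))

lemma step_eq_iff (hm : 0 ≤ μ n) (hq : 0 ≤ p n) (he : 0 ≤ η n) (a b a' b' : ℝ) :
    step Lam μ p η n (WithLp.toLp 1 (a, b)) = WithLp.toLp 1 (a', b') ↔
      a' = (Lam n + η n * b' + a) / (1 + μ n + p n) ∧ b' = (p n * a' + b) / (1 + μ n + η n) := by
  have hA : 1 + μ n + p n ≠ 0 := by positivity
  have hB : 1 + μ n + η n ≠ 0 := by positivity
  have hD : (1 + μ n) * (1 + μ n + η n + p n) ≠ 0 := by positivity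
  simp only [step, WithLp.toLp_fst, WithLp.toLp_snd, (WithLp.toLp_injective 1).eq_iff, Prod.mk.injEq]
  rw [div_eq_iff hD, div_eq_iff hD, eq_div_iff hA, eq_div_iff hB]
  constructor
  · rintro ⟨h1, h2⟩
    constructor <;> apply mul_left_cancel₀ hD
    · linear_combination -(1 + μ n + p n) * h1 + η n * h2
    · linear_combination p n * h1 - (1 + μ n + η n) * h2
  · rintro ⟨h1, h2⟩
    constructor
    · linear_combination -(1 + μ n + η n) * h1 - η n * h2
    · linear_combination -p n * h1 - (1 + μ n + p n) * h2

lemma auxSys_iff_orbit (hm : ∀ n, 0 ≤ μ n) (hq : ∀ n, 0 ≤ p n) (he : ∀ n, 0 ≤ η n)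
    {x y : ℕ → ℝ} :
    AuxSys Lam μ p η x y ↔
      ∀ n, WithLp.toLp 1 (x n, y n) = orbit (step Lam μ p η) (WithLp.toLp 1 (x 0, y 0)) n := by
  rw [eq_orbit_iff (u := fun n => WithLp.toLp 1 (x n, y n))]
  exact forall_congr' fun n => (eq_comm.trans (step_eq_iff (hm n) (hq n) (he n) _ _ _ _)).symm

lemma auxSys_orbit (hm : ∀ n, 0 ≤ μ n) (hq : ∀ n, 0 ≤ p n) (he : ∀ n, 0 ≤ η n)
    (z : WithLp 1 (ℝ × ℝ)) :
    AuxSys Lam μ p η (fun n => (orbit (step Lam μ p η) z n).fst)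
      (fun n => (orbit (step Lam μ p η) z n).snd) :=
  (auxSys_iff_orbit hm hq he).2 fun _ => rfl

/-- The matrix of the step has nonnegative entries and all column sums equal to `(1 + μ)⁻¹`,
so it contracts the `ℓ¹` distance by that factor. -/
lemma dist_step_le (hm : 0 ≤ μ n) (hq : 0 ≤ p n) (he : 0 ≤ η n) (z z' : WithLp 1 (ℝ × ℝ)) :
    dist (step Lam μ p η n z) (step Lam μ p η n z') ≤ (1 + μ n)⁻¹ * dist z z' := by
  have hD : 0 < (1 + μ n) * (1 + μ n + η n + p n) := by positivity
  have h1 : (step Lam μ p η n z).fst - (step Lam μ p η n z').fst =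
      ((1 + μ n + η n) * (z.fst - z'.fst) + η n * (z.snd - z'.snd)) /
        ((1 + μ n) * (1 + μ n + η n + p n)) := by
    simp only [step, WithLp.toLp_fst]; ring
  have h2 : (step Lam μ p η n z).snd - (step Lam μ p η n z').snd =
      (p n * (z.fst - z'.fst) + (1 + μ n + p n) * (z.snd - z'.snd)) /
        ((1 + μ n) * (1 + μ n + η n + p n)) := by
    simp only [step, WithLp.toLp_snd]; ring
  rw [WithLp.prod_dist_eq_of_L1, WithLp.prod_dist_eq_of_L1, Real.dist_eq, Real.dist_eq,
    Real.dist_eq, Real.dist_eq, h1, h2, abs_div, abs_div, abs_of_pos hD, ← add_div,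
    div_le_iff₀ hD]
  calc _ ≤ ((1 + μ n + η n) * |z.fst - z'.fst| + η n * |z.snd - z'.snd|) +
        (p n * |z.fst - z'.fst| + (1 + μ n + p n) * |z.snd - z'.snd|) :=
        add_le_add (abs_mul_add_mul_le (by positivity) he) (abs_mul_add_mul_le hq (by positivity))
    _ = _ := by field_simp; ring

lemma lipschitzWith_step (hm : ∀ n, 0 ≤ μ n) (hq : ∀ n, 0 ≤ p n) (he : ∀ n, 0 ≤ η n) (n : ℕ) :
    LipschitzWith (1 + μ n)⁻¹.toNNReal (step Lam μ p η n) :=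
  .of_dist_le_mul fun z z' => by
    rw [Real.coe_toNNReal _ (by have := hm n; positivity)]
    exact dist_step_le (hm n) (hq n) (he n) z z'

lemma step_periodic {ω : ℕ}
    (hper : ∀ n, Lam (n + ω) = Lam n ∧ μ (n + ω) = μ n ∧ p (n + ω) = p n ∧ η (n + ω) = η n) :
    Periodic (step Lam μ p η) ω := fun n => by
  obtain ⟨h1, h2, h3, h4⟩ := hper n
  funext z
  simp only [step, h1, h2, h3, h4]

lemma mapsTo_step (hL : 0 ≤ Lam n) (hm : 0 ≤ μ n) (hq : 0 ≤ p n) (he : 0 ≤ η n) :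
    MapsTo (step Lam μ p η n) {z | 0 ≤ z.fst ∧ 0 ≤ z.snd} {z | 0 ≤ z.fst ∧ 0 ≤ z.snd} :=
  fun z ⟨hx, hy⟩ =>
    ⟨by simp only [step, WithLp.toLp_fst]; positivity, by simp only [step, WithLp.toLp_snd]; positivity⟩

lemma prod_inv_one_add_lt_one (hm : ∀ n, 0 ≤ μ n) {ω : ℕ} (hμ : Periodic μ ω) (hω : 0 < ω)
    (hpos : ∃ k, 0 < μ k) : ∏ k ∈ range ω, (1 + μ k)⁻¹.toNNReal < 1 := by
  obtain ⟨k, hk⟩ := hpos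
  have hle : ∀ i, (1 + μ i)⁻¹.toNNReal ≤ 1 := fun i =>
    Real.toNNReal_le_one.2 (inv_le_one_of_one_le₀ (by linarith [hm i]))
  refine (prod_lt_one_iff_of_le_one fun i _ => hle i).2
    ⟨k % ω, mem_range.2 (Nat.mod_lt k hω), Real.toNNReal_lt_one.2 ?_⟩
  rw [hμ.map_mod_nat]
  exact inv_lt_one_of_one_lt₀ (by linarith)

lemma pos_of_periodic (hL : ∀ n, 0 ≤ Lam n) (hm : ∀ n, 0 ≤ μ n) (hq : ∀ n, 0 ≤ p n)
    (he : ∀ n, 0 ≤ η n) (hLpos : ∃ k, 0 < Lam k) (hppos : ∃ k, 0 < p k) {ω : ℕ} (hω : 0 < ω)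
    {x y : ℕ → ℝ} (h : AuxSys Lam μ p η x y) (hnn : ∀ n, 0 ≤ x n ∧ 0 ≤ y n)
    (hx : Periodic x ω) (hy : Periodic y ω) (n : ℕ) : 0 < x n ∧ 0 < y n := by
  obtain ⟨k, hk⟩ := hLpos
  obtain ⟨j, hj⟩ := hppos
  have hx_succ : ∀ n, 0 < Lam n ∨ 0 < x n → 0 < x (n + 1) := fun n hn => by
    rw [(h n).1]
    have hηy := mul_nonneg (he n) (hnn (n + 1)).2
    refine div_pos ?_ (by linarith [hm n, hq n])
    rcases hn with hn | hn <;> linarith [hL n, (hnn n).1]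
  have hx_pos : ∀ n, 0 < x n :=
    hx.pos_of_succ_pos hω (hx_succ k (.inl hk)) fun n hn => hx_succ n (.inr hn)
  have hy_succ : ∀ n, 0 < p n ∨ 0 < y n → 0 < y (n + 1) := fun n hn => by
    rw [(h n).2]
    refine div_pos ?_ (by linarith [hm n, he n])
    rcases hn with hn | hn
    · nlinarith [hx_pos (n + 1), (hnn n).2]
    · nlinarith [hq n, hx_pos (n + 1)]
  exact ⟨hx_pos n, hy.pos_of_succ_pos hω (hy_succ j (.inl hj)) (fun n hn => hy_succ n (.inr hn)) n⟩

lemma eq_orbit (hm : ∀ n, 0 ≤ μ n) (hq : ∀ n, 0 ≤ p n) (he : ∀ n, 0 ≤ η n) {x y : ℕ → ℝ}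
    (h : AuxSys Lam μ p η x y) :
    x = (fun n => (orbit (step Lam μ p η) (WithLp.toLp 1 (x 0, y 0)) n).fst) ∧
      y = (fun n => (orbit (step Lam μ p η) (WithLp.toLp 1 (x 0, y 0)) n).snd) := by
  have := (auxSys_iff_orbit hm hq he).1 h
  exact ⟨funext fun n => congrArg WithLp.fst (this n), funext fun n => congrArg WithLp.snd (this n)⟩

lemma isFixedPt_of_periodic (hm : ∀ n, 0 ≤ μ n) (hq : ∀ n, 0 ≤ p n) (he : ∀ n, 0 ≤ η n)
    {x y : ℕ → ℝ} {ω : ℕ} (h : AuxSys Lam μ p η x y) (hx : Periodic x ω) (hy : Periodic y ω) :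
    IsFixedPt (orbit (step Lam μ p η) · ω) (WithLp.toLp 1 (x 0, y 0)) := by
  rw [IsFixedPt, ← (auxSys_iff_orbit hm hq he).1 h ω, ← zero_add ω, hx, hy]

theorem exists_attracting_periodic_orbit (hL : ∀ n, 0 ≤ Lam n) (hm : ∀ n, 0 ≤ μ n)
    (hq : ∀ n, 0 ≤ p n) (he : ∀ n, 0 ≤ η n) {ω : ℕ} (hω : 0 < ω)
    (hper : ∀ n, Lam (n + ω) = Lam n ∧ μ (n + ω) = μ n ∧ p (n + ω) = p n ∧ η (n + ω) = η n)
    (hμpos : ∃ k, 0 < μ k) :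
    ∃ zs : WithLp 1 (ℝ × ℝ),
      (∀ n, 0 ≤ (orbit (step Lam μ p η) zs n).fst ∧ 0 ≤ (orbit (step Lam μ p η) zs n).snd) ∧
      IsFixedPt (orbit (step Lam μ p η) · ω) zs ∧
      (∀ z, IsFixedPt (orbit (step Lam μ p η) · ω) z → z = zs) ∧
      ∀ z, Tendsto (fun n => dist (orbit (step Lam μ p η) z n) (orbit (step Lam μ p η) zs n))
        atTop (𝓝 0) := by
  have hK := lipschitzWith_step (Lam := Lam) hm hq he
  have hC : ContractingWith _ (orbit (step Lam μ p η) · ω) :=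
    ⟨prod_inv_one_add_lt_one hm (fun n => (hper n).2.1) hω hμpos, lipschitzWith_orbit hK ω⟩
  set Q : Set (WithLp 1 (ℝ × ℝ)) := {z | 0 ≤ z.fst ∧ 0 ≤ z.snd}
  have hQ : IsClosed Q := (isClosed_le continuous_const (WithLp.continuous_fst ..)).inter
    (isClosed_le continuous_const (WithLp.continuous_snd ..))
  have hmaps := mapsTo_orbit (s := Q) fun n => mapsTo_step (hL n) (hm n) (hq n) (he n)
  -- the fixed point is the limit of the iterates of `0` under the period map, which stay in `Q`
  have hQ_mem : hC.fixedPoint ∈ Q := hQ.mem_of_tendsto (hC.tendsto_iterate_fixedPoint 0)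
    (.of_forall fun j => (hmaps ω).iterate j ⟨le_rfl, le_rfl⟩)
  exact ⟨hC.fixedPoint, fun n => hmaps n hQ_mem, hC.fixedPoint_isFixedPt,
    fun _ => hC.fixedPoint_unique,
    tendsto_dist_orbit hω (step_periodic hper) hK hC hC.fixedPoint_isFixedPt⟩

end AuxSys

open Nonautonomous AuxSys in
/-- In the periodic case the auxiliary system has a unique positive `ω`-periodic solution,
and this solution is globally attractive. -/
theorem statement19 (Lam μ p η : ℕ → ℝ)
    (hLam : BddNonneg Lam) (hμ : BddNonneg μ) (hp : BddNonneg p) (hη : BddNonneg η)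
    (ω : ℕ) (hω : 0 < ω)
    (hper : ∀ n : ℕ, Lam (n+ω) = Lam n ∧ μ (n+ω) = μ n ∧ p (n+ω) = p n ∧ η (n+ω) = η n)
    (ωμ : ℕ)
    (h3 : Filter.limsup
      (fun n => ∏ k ∈ Finset.Icc n (n + ωμ), (1 + μ k)⁻¹) Filter.atTop < 1)
    (ωΛ : ℕ)
    (h4Λ : 0 < Filter.liminf
      (fun n => ∑ k ∈ Finset.Icc (n+1) (n+ωΛ), Lam k) Filter.atTop)
    (ωp : ℕ)
    (h4p : 0 < Filter.liminf
      (fun n => ∑ k ∈ Finset.Icc (n+1) (n+ωp), p k) Filter.atTop) :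
    ∃ xs ys : ℕ → ℝ,
      AuxSys Lam μ p η xs ys ∧
      (∀ n, 0 < xs n ∧ 0 < ys n) ∧
      (∀ n, xs (n+ω) = xs n ∧ ys (n+ω) = ys n) ∧
      (∀ xs' ys' : ℕ → ℝ, AuxSys Lam μ p η xs' ys' →
        (∀ n, 0 < xs' n ∧ 0 < ys' n) →
        (∀ n, xs' (n+ω) = xs' n ∧ ys' (n+ω) = ys' n) →
        xs' = xs ∧ ys' = ys) ∧
      (∀ x y : ℕ → ℝ, AuxSys Lam μ p η x y → 0 ≤ x 0 → 0 ≤ y 0 →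
        Filter.Tendsto (fun n => x n - xs n) Filter.atTop (nhds 0) ∧
        Filter.Tendsto (fun n => y n - ys n) Filter.atTop (nhds 0)) := by
  obtain ⟨hL, -⟩ := hLam
  obtain ⟨hm, -⟩ := hμ
  obtain ⟨hq, -⟩ := hp
  obtain ⟨he, -⟩ := hη
  obtain ⟨zs, hnonneg, hfix, hunique, hattr⟩ :=
    exists_attracting_periodic_orbit hL hm hq he hω hper (exists_pos_of_limsup_prod_lt_one hm h3)
  have hperiodic : ∀ n, orbit (step Lam μ p η) zs (n + ω) = orbit (step Lam μ p η) zs n :=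
    fun n => by rw [orbit_add_period (step_periodic hper), hfix.eq]
  have hsol : AuxSys Lam μ p η _ _ := auxSys_orbit hm hq he zs
  refine ⟨_, _, hsol, pos_of_periodic hL hm hq he (exists_pos_of_liminf_sum_pos hL h4Λ)
      (exists_pos_of_liminf_sum_pos hq h4p) hω hsol hnonneg
      (fun n => congrArg WithLp.fst (hperiodic n)) (fun n => congrArg WithLp.snd (hperiodic n)),
    fun n => ⟨congrArg WithLp.fst (hperiodic n), congrArg WithLp.snd (hperiodic n)⟩, ?_, ?_⟩
  · intro xs' ys' h' _ hper'
    rw [← hunique _ (isFixedPt_of_periodic hm hq he h' (fun n => (hper' n).1) fun n => (hper' n).2)]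
    exact eq_orbit hm hq he h'
  · intro x y h _ _
    obtain ⟨hx, hy⟩ := eq_orbit hm hq he h
    rw [hx, hy]
    exact ⟨squeeze_zero_norm (fun n => (dist_eq_norm _ _).symm.trans_le (WithLp.dist_fst_le _ _))
        (hattr _),
      squeeze_zero_norm (fun n => (dist_eq_norm _ _).symm.trans_le (WithLp.dist_snd_le _ _))
        (hattr _)⟩
end
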